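/- Let B be a C*-algebra, E a Hilbert B-module, and p : E → E any function satisfying ⟨x, p(y)⟩ = ⟨p(x), p(y)⟩ for all x, y ∈ E. Then p is an adjointable projection: p is additive, ℂ-homogeneous, and B-linear (p(x·b) = p(x)·b), satisfies ⟨p(x), y⟩ = ⟨x, p(y)⟩ for all x, y ∈ E, is idempotent (p∘p = p), and is bounded. -/

import Mathlib

open scoped RightActions

/-- The closed linear span of a subset of a topological `ℂ`-module. -/
noncomputable def clSpan {M : Type*} [AddCommMonoid M] [Module ℂ M] [TopologicalSpace M]
    (S : Set M) : Set M :=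
  closure (Submodule.span ℂ S : Set M)

/-- A subset is a (complex) linear subspace. -/
def IsLinearSubspace {M : Type*} [AddCommMonoid M] [Module ℂ M] (K : Set M) : Prop :=
  (0 : M) ∈ K ∧ (∀ x ∈ K, ∀ y ∈ K, x + y ∈ K) ∧ ∀ (c : ℂ), ∀ x ∈ K, c • x ∈ K

/-- A closed two-sided ideal of a C*-algebra `B`. -/
structure IsClosedTwoSidedIdeal {B : Type*} [NonUnitalCStarAlgebra B] (I : Set B) : Prop where
  isClosed : IsClosed I
  subspace : IsLinearSubspace I
  mul_mem_left : ∀ (b : B), ∀ a ∈ I, b * a ∈ I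
  mul_mem_right : ∀ (b : B), ∀ a ∈ I, a * b ∈ I

/-- The Hilbert C⋆-module class as it stood in Mathlib (December 2024): a right module
(action of `Aᵐᵒᵖ`) with an `A`-valued inner product, `A`-linear on the right in the second
variable. Mathlib's `CStarModule` has since become a left module, so the old class is restated. -/
class CStarModuleRight (A E : Type*) [NonUnitalSemiring A] [StarRing A]
    [Module ℂ A] [AddCommGroup E] [Module ℂ E] [PartialOrder A] [SMul Aᵐᵒᵖ E] [Norm A] [Norm E]
    extends Inner A E where
  inner_add_right {x} {y} {z} : inner x (y + z) = inner x y + inner x z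
  inner_self_nonneg {x} : 0 ≤ inner x x
  inner_self {x} : inner x x = 0 ↔ x = 0
  inner_op_smul_right {a : A} {x y : E} : inner x (y <• a) = inner x y * a
  inner_smul_right_complex {z : ℂ} {x} {y} : inner x (z • y) = z • inner x y
  star_inner x y : star (inner x y) = inner y x
  norm_eq_sqrt_norm_inner_self x : ‖x‖ = Real.sqrt ‖inner x x‖

section HilbertModule

variable (B : Type*) [NonUnitalCStarAlgebra B] [PartialOrder B] [StarOrderedRing B]
variable {E : Type*} [NormedAddCommGroup E] [NormedSpace ℂ E] [SMul Bᵐᵒᵖ E] [CStarModuleRight B E]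

/-- `K ⊆ E` is an *ideal submodule* if it is the closed linear span of
`{x <• i : x ∈ E, i ∈ I}` for some closed two-sided ideal `I` of `B`. -/
def IsIdealSubmodule (K : Set E) : Prop :=
  ∃ I : Set B, IsClosedTwoSidedIdeal I ∧
    K = clSpan {z : E | ∃ x : E, ∃ i ∈ I, z = x <• i}

/-- A *ternary ideal* of a Hilbert `B`-module `E`: a linear subspace `K` with
`x <• ⟪k, y⟫ ∈ K` for all `x y ∈ E` and `k ∈ K`. -/
def IsTernaryIdeal (K : Set E) : Prop :=
  IsLinearSubspace K ∧ ∀ (x y : E), ∀ k ∈ K, x <• (inner B k y : B) ∈ K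

/-- `B_S`: the closed linear span in `B` of all inner products of elements of `S`. -/
noncomputable def rangeIdeal (S : Set E) : Set B :=
  clSpan {b : B | ∃ k ∈ S, ∃ k' ∈ S, b = (inner B k k' : B)}

/-- The orthogonal complement of a subset of a Hilbert `B`-module. -/
def perp (S : Set E) : Set E :=
  {x : E | ∀ s ∈ S, (inner B x s : B) = 0}

end HilbertModule


/-! The condition `⟪x, p y⟫ = ⟪p x, p y⟫` forces `p` to be self-adjoint, since the right-hand side
is symmetric under `star`. A map with an adjoint is linear because inner products against all
vectors separate points, and `⟪z, p (p x)⟫ = ⟪p z, p x⟫ = ⟪z, p x⟫` gives idempotence. Finally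
`p x` is orthogonal to `x - p x`, so `⟪x, x⟫ = ⟪p x, p x⟫ + ⟪x - p x, x - p x⟫ ≥ ⟪p x, p x⟫`,
and `p` is a contraction. -/

namespace CStarModuleRight

variable {B : Type*} [NonUnitalCStarAlgebra B] [PartialOrder B]
variable {E : Type*} [NormedAddCommGroup E] [NormedSpace ℂ E] [SMul Bᵐᵒᵖ E] [CStarModuleRight B E]

theorem inner_sub_right (x y z : E) :
    (inner B x (y - z) : B) = inner B x y - inner B x z :=
  eq_sub_of_add_eq <| by rw [← inner_add_right, sub_add_cancel]

theorem inner_add_left (x y z : E) :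
    (inner B (x + y) z : B) = inner B x z + inner B y z := by
  rw [← star_inner z, inner_add_right, star_add, star_inner, star_inner]

theorem inner_add_add_self_of_inner_eq_zero {x y : E} (h : (inner B x y : B) = 0) :
    (inner B (x + y) (x + y) : B) = inner B x x + inner B y y := by
  have h' : (inner B y x : B) = 0 := by rw [← star_inner, h, star_zero]
  rw [inner_add_left, inner_add_right, inner_add_right, h, h', add_zero, zero_add]

theorem ext_inner_left {x y : E} (h : ∀ z : E, (inner B z x : B) = inner B z y) : x = y := by
  rw [← sub_eq_zero, ← norm_eq_zero, norm_eq_sqrt_norm_inner_self (A := B),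
    inner_sub_right, h, sub_self, norm_zero, Real.sqrt_zero]

theorem norm_le_norm_of_inner_self_le [StarOrderedRing B] {x y : E}
    (h : (inner B x x : B) ≤ inner B y y) : ‖x‖ ≤ ‖y‖ := by
  rw [norm_eq_sqrt_norm_inner_self (A := B) x, norm_eq_sqrt_norm_inner_self (A := B) y]
  exact Real.sqrt_le_sqrt (CStarAlgebra.norm_le_norm_of_nonneg_of_le inner_self_nonneg h)

section Adjoint

variable {p q : E → E} (hpq : ∀ x y : E, (inner B (q x) y : B) = inner B x (p y))
include hpq

theorem map_add_of_inner_adjoint (x y : E) : p (x + y) = p x + p y :=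
  ext_inner_left (B := B) fun z => by
    rw [← hpq, inner_add_right, inner_add_right, hpq, hpq]

theorem map_smul_of_inner_adjoint (c : ℂ) (x : E) : p (c • x) = c • p x :=
  ext_inner_left (B := B) fun z => by
    rw [← hpq, inner_smul_right_complex, inner_smul_right_complex, hpq]

theorem map_op_smul_of_inner_adjoint (x : E) (b : B) : p (x <• b) = p x <• b :=
  ext_inner_left (B := B) fun z => by
    rw [← hpq, inner_op_smul_right, inner_op_smul_right, hpq]

end Adjoint

section InnerCondition

variable {p : E → E} (hp : ∀ x y : E, (inner B x (p y) : B) = inner B (p x) (p y))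
include hp

theorem inner_apply_left_of_inner_condition (x y : E) :
    (inner B (p x) y : B) = inner B x (p y) := by
  rw [← star_inner y, hp y x, star_inner, hp x y]

theorem apply_apply_of_inner_condition (x : E) : p (p x) = p x :=
  ext_inner_left (B := B) fun z =>
    (inner_apply_left_of_inner_condition hp z (p x)).symm.trans (hp z x).symm

theorem inner_apply_sub_apply_of_inner_condition (x : E) :
    (inner B (p x) (x - p x) : B) = 0 := by
  rw [inner_sub_right, inner_apply_left_of_inner_condition hp, hp, sub_self]

theorem norm_apply_le_of_inner_condition [StarOrderedRing B] (x : E) : ‖p x‖ ≤ ‖x‖ := by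
  refine norm_le_norm_of_inner_self_le (B := B) ?_
  conv_rhs => rw [← add_sub_cancel (p x) x]
  rw [inner_add_add_self_of_inner_eq_zero (inner_apply_sub_apply_of_inner_condition hp x)]
  exact le_add_of_nonneg_right inner_self_nonneg

end InnerCondition

end CStarModuleRight

open CStarModuleRight in
theorem selfAdjoint_projection_of_inner_condition_general
    {B : Type*} [NonUnitalCStarAlgebra B] [PartialOrder B] [StarOrderedRing B]
    {E : Type*} [NormedAddCommGroup E] [NormedSpace ℂ E] [SMul Bᵐᵒᵖ E]
    [CStarModuleRight B E] (p : E → E)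
    (hp : ∀ x y : E, (inner B x (p y) : B) = (inner B (p x) (p y) : B)) :
    (∀ x y : E, p (x + y) = p x + p y) ∧
    (∀ (c : ℂ) (x : E), p (c • x) = c • p x) ∧
    (∀ (x : E) (b : B), p (x <• b) = p x <• b) ∧
    (∀ x y : E, (inner B (p x) y : B) = (inner B x (p y) : B)) ∧
    (∀ x : E, p (p x) = p x) ∧
    (∃ C : ℝ, ∀ x : E, ‖p x‖ ≤ C * ‖x‖) := by
  have hsa := inner_apply_left_of_inner_condition hp
  exact ⟨map_add_of_inner_adjoint hsa, map_smul_of_inner_adjoint hsa,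
    map_op_smul_of_inner_adjoint hsa, hsa, apply_apply_of_inner_condition hp,
    1, fun x => by simpa using norm_apply_le_of_inner_condition hp x⟩

/-- a map `p : E → E` with `⟨x, p y⟩ = ⟨p x, p y⟩` for all `x, y` is an
adjointable projection: additive, `ℂ`-homogeneous, `B`-linear, self-adjoint, idempotent and
bounded. -/
theorem selfAdjoint_projection_of_inner_condition
    {B : Type*} [NonUnitalCStarAlgebra B] [PartialOrder B] [StarOrderedRing B]
    {E : Type*} [NormedAddCommGroup E] [NormedSpace ℂ E] [SMul Bᵐᵒᵖ E]
    [CStarModuleRight B E] [CompleteSpace E] (p : E → E)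
    (hp : ∀ x y : E, (inner B x (p y) : B) = (inner B (p x) (p y) : B)) :
    (∀ x y : E, p (x + y) = p x + p y) ∧
    (∀ (c : ℂ) (x : E), p (c • x) = c • p x) ∧
    (∀ (x : E) (b : B), p (x <• b) = p x <• b) ∧
    (∀ x y : E, (inner B (p x) y : B) = (inner B x (p y) : B)) ∧
    (∀ x : E, p (p x) = p x) ∧
    (∃ C : ℝ, ∀ x : E, ‖p x‖ ≤ C * ‖x‖) :=
  selfAdjoint_projection_of_inner_condition_general p hp
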